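/- arXiv:1805.00533 — 2 statements merged into one kernel-verified Lean document; each statement's English description precedes it below -/
import Mathlib

section
/- For ρ ∈ (-1,0), ∫₀^∞ t² e^{-t²/2} Φ(ρt/√(1-ρ²)) dt = −(1/√(2π))·(arctan(√(1-ρ²)/ρ) − ρ√(1-ρ²)). -/
open MeasureTheory Real Filter Set

noncomputable def Phi (x : ℝ) : ℝ :=
  ∫ s in Set.Iic x, (1 / Real.sqrt (2 * Real.pi)) * Real.exp (-s ^ 2 / 2)

noncomputable def stdPdf (x : ℝ) : ℝ := (1 / Real.sqrt (2 * Real.pi)) * Real.exp (-x ^ 2 / 2)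

noncomputable def phi2 (ρ x y : ℝ) : ℝ :=
  (1 / (2 * Real.pi * Real.sqrt (1 - ρ ^ 2))) *
    Real.exp (-(x ^ 2 - 2 * ρ * x * y + y ^ 2) / (2 * (1 - ρ ^ 2)))

noncomputable def sg (x : ℝ) : ℝ := if 0 ≤ x then 1 else -1

/-!
Write `I a = ∫₀^∞ t² e^{-t²/2} Φ(a t) dt`. Differentiating under the integral sign,
`I' a = ∫₀^∞ t³ e^{-t²/2} φ(a t) dt = 2 / (√(2π) (1 + a²)²)`, which is also the derivative of
`(arctan a + a / (1 + a²)) / √(2π)`. Since `I 0 = Φ 0 · √(2π) / 2 = √(2π) / 4`, this determines `I`.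
The theorem is the value at `a = ρ / √(1 - ρ²)`, rewritten with `arctan (1/x) = -π/2 - arctan x`
for `x < 0`.
-/

open ProbabilityTheory

lemma stdPdf_eq_gaussianPDFReal : stdPdf = gaussianPDFReal 0 1 := by
  ext x; simp [stdPdf, gaussianPDFReal]

@[fun_prop]
lemma continuous_stdPdf : Continuous stdPdf := by
  unfold stdPdf; fun_prop

lemma integrable_stdPdf : Integrable stdPdf :=
  stdPdf_eq_gaussianPDFReal ▸ integrable_gaussianPDFReal 0 1

lemma stdPdf_nonneg (x : ℝ) : 0 ≤ stdPdf x :=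
  stdPdf_eq_gaussianPDFReal ▸ gaussianPDFReal_nonneg 0 1 x

lemma stdPdf_le (x : ℝ) : stdPdf x ≤ 1 / √(2 * π) := by
  unfold stdPdf
  exact mul_le_of_le_one_right (by positivity) (exp_le_one_iff.2 (by nlinarith [sq_nonneg x]))

lemma integral_stdPdf : ∫ s, stdPdf s = 1 := by
  rw [stdPdf_eq_gaussianPDFReal, integral_gaussianPDFReal_eq_one 0 one_ne_zero]

lemma Phi_eq_integral_stdPdf (x : ℝ) : Phi x = ∫ s in Iic x, stdPdf s := rfl

lemma Phi_nonneg (x : ℝ) : 0 ≤ Phi x :=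
  setIntegral_nonneg measurableSet_Iic fun s _ => stdPdf_nonneg s

lemma Phi_le_one (x : ℝ) : Phi x ≤ 1 := by
  calc Phi x ≤ ∫ s, stdPdf s :=
        setIntegral_le_integral integrable_stdPdf (.of_forall stdPdf_nonneg)
    _ = 1 := integral_stdPdf

lemma Phi_zero : Phi 0 = 1 / 2 := by
  have hsymm : Phi 0 = ∫ s in Ioi 0, stdPdf s := by
    rw [Phi_eq_integral_stdPdf, ← neg_zero, ← integral_comp_neg_Iic]
    simp [stdPdf]
  have htotal : Phi 0 + ∫ s in Ioi 0, stdPdf s = 1 := by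
    rw [Phi_eq_integral_stdPdf, intervalIntegral.integral_Iic_add_Ioi
      integrable_stdPdf.integrableOn integrable_stdPdf.integrableOn, integral_stdPdf]
  linarith

lemma hasDerivAt_Phi (x : ℝ) : HasDerivAt Phi (stdPdf x) x := by
  have hPhi : ∀ y, Phi y = Phi 0 + ∫ s in (0 : ℝ)..y, stdPdf s := fun y => by
    rw [Phi_eq_integral_stdPdf, Phi_eq_integral_stdPdf, ← intervalIntegral.integral_Iic_sub_Iic
      integrable_stdPdf.integrableOn integrable_stdPdf.integrableOn]
    ring
  rw [funext hPhi]
  exact (intervalIntegral.integral_hasDerivAt_right integrable_stdPdf.intervalIntegrable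
    (continuous_stdPdf.stronglyMeasurableAtFilter _ _) continuous_stdPdf.continuousAt).const_add _

@[fun_prop]
lemma continuous_Phi : Continuous Phi :=
  continuous_iff_continuousAt.2 fun x => (hasDerivAt_Phi x).continuousAt

lemma integrableOn_pow_mul_exp_neg_mul_sq (n : ℕ) {b : ℝ} (hb : 0 < b) :
    IntegrableOn (fun t : ℝ => t ^ n * exp (-b * t ^ 2)) (Ioi 0) := by
  simpa only [rpow_natCast] using
    integrableOn_rpow_mul_exp_neg_mul_sq hb (s := n) (by linarith [n.cast_nonneg (α := ℝ)])

lemma integral_pow_mul_exp_neg_mul_sq (n : ℕ) {b : ℝ} (hb : 0 < b) :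
    ∫ t in Ioi (0 : ℝ), t ^ n * exp (-b * t ^ 2) =
      b ^ (-(n + 1) / 2 : ℝ) / 2 * Gamma ((n + 1) / 2) := by
  have h := integral_rpow_mul_exp_neg_mul_rpow two_pos
    (by linarith [n.cast_nonneg (α := ℝ)]) hb (q := n)
  simp only [rpow_natCast, rpow_two] at h
  rw [h]
  ring

lemma integral_cube_mul_exp_neg_mul_sq {b : ℝ} (hb : 0 < b) :
    ∫ t in Ioi (0 : ℝ), t ^ 3 * exp (-b * t ^ 2) = 1 / (2 * b ^ 2) := by
  rw [integral_pow_mul_exp_neg_mul_sq 3 hb]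
  norm_num [rpow_neg hb.le]
  field_simp

lemma integral_sq_mul_exp_neg_sq_div_two :
    ∫ t in Ioi (0 : ℝ), t ^ 2 * exp (-t ^ 2 / 2) = √(2 * π) / 2 := by
  have h := integral_pow_mul_exp_neg_mul_sq 2 (b := 1 / 2) (by norm_num)
  have hpow : (1 / 2 : ℝ) ^ (-(2 + 1) / 2 : ℝ) = 2 * √2 := by
    rw [one_div, inv_rpow zero_le_two, ← rpow_neg zero_le_two, sqrt_eq_rpow,
      ← rpow_one_add' zero_le_two (by norm_num)]
    norm_num
  push_cast at h
  rw [hpow, show ((2 : ℝ) + 1) / 2 = 1 / 2 + 1 by norm_num, Gamma_add_one (by norm_num),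
    Gamma_one_half_eq] at h
  rw [sqrt_mul zero_le_two, show √2 * √π / 2 = 2 * √2 / 2 * (1 / 2 * √π) by ring, ← h]
  refine setIntegral_congr_fun measurableSet_Ioi fun t _ => ?_
  ring_nf

noncomputable def phiMoment (a : ℝ) : ℝ :=
  ∫ t in Ioi 0, t ^ 2 * exp (-t ^ 2 / 2) * Phi (a * t)

lemma exp_neg_sq_div_two (t : ℝ) : exp (-t ^ 2 / 2) = exp (-(1 / 2) * t ^ 2) := by
  congr 1; ring

lemma integrableOn_phiMoment_integrand (a : ℝ) :
    IntegrableOn (fun t => t ^ 2 * exp (-t ^ 2 / 2) * Phi (a * t)) (Ioi 0) := by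
  refine Integrable.mono' (integrableOn_pow_mul_exp_neg_mul_sq 2 one_half_pos) ?_
    (.of_forall fun t => ?_)
  · exact (by fun_prop : Continuous fun t => t ^ 2 * exp (-t ^ 2 / 2) * Phi (a * t))
      |>.aestronglyMeasurable
  · rw [norm_mul, norm_of_nonneg (by positivity), norm_of_nonneg (Phi_nonneg _),
      exp_neg_sq_div_two]
    exact mul_le_of_le_one_right (by positivity) (Phi_le_one _)

lemma hasDerivAt_phiMoment (a : ℝ) :
    HasDerivAt phiMoment (2 / (√(2 * π) * (1 + a ^ 2) ^ 2)) a := by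
  have hderiv : ∀ t x : ℝ, HasDerivAt (fun x => t ^ 2 * exp (-t ^ 2 / 2) * Phi (x * t))
      (t ^ 3 * exp (-t ^ 2 / 2) * stdPdf (x * t)) x := fun t x =>
    (((hasDerivAt_Phi (x * t)).comp x (hasDerivAt_mul_const t)).const_mul
      (t ^ 2 * exp (-t ^ 2 / 2))).congr_deriv (by ring)
  have hbound : ∀ᵐ t ∂volume.restrict (Ioi 0), ∀ x ∈ (univ : Set ℝ),
      ‖t ^ 3 * exp (-t ^ 2 / 2) * stdPdf (x * t)‖ ≤
        1 / √(2 * π) * (t ^ 3 * exp (-(1 / 2) * t ^ 2)) := by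
    filter_upwards [ae_restrict_mem measurableSet_Ioi] with t (ht : 0 < t) x _
    rw [norm_mul, norm_of_nonneg (by positivity), norm_of_nonneg (stdPdf_nonneg _),
      exp_neg_sq_div_two, mul_comm]
    exact mul_le_mul_of_nonneg_right (stdPdf_le _) (by positivity)
  -- `e^{-t²/2} φ(at)` is a Gaussian of variance `1/(1+a²)` in `t`
  have hmoment : ∫ t in Ioi 0, t ^ 3 * exp (-t ^ 2 / 2) * stdPdf (a * t) =
      1 / √(2 * π) * ∫ t in Ioi 0, t ^ 3 * exp (-((1 + a ^ 2) / 2) * t ^ 2) := by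
    rw [← integral_const_mul]
    refine setIntegral_congr_fun measurableSet_Ioi fun t _ => ?_
    simp only [stdPdf]
    rw [show -((1 + a ^ 2) / 2) * t ^ 2 = -t ^ 2 / 2 + -(a * t) ^ 2 / 2 by ring, exp_add]
    ring
  have hcont : Continuous fun t => t ^ 3 * exp (-t ^ 2 / 2) * stdPdf (a * t) := by fun_prop
  have h := (hasDerivAt_integral_of_dominated_loc_of_deriv_le (μ := volume.restrict (Ioi 0))
    (F := fun x t => t ^ 2 * exp (-t ^ 2 / 2) * Phi (x * t)) univ_mem
    (.of_forall fun x => (integrableOn_phiMoment_integrand x).aestronglyMeasurable)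
    (integrableOn_phiMoment_integrand a) hcont.aestronglyMeasurable hbound
    ((integrableOn_pow_mul_exp_neg_mul_sq 3 one_half_pos).const_mul _)
    (.of_forall fun t x _ => hderiv t x)).2
  rw [hmoment, integral_cube_mul_exp_neg_mul_sq (by positivity)] at h
  exact h.congr_deriv (by field_simp)

lemma phiMoment_zero : phiMoment 0 = √(2 * π) / 4 := by
  simp only [phiMoment, zero_mul, Phi_zero, integral_mul_const, integral_sq_mul_exp_neg_sq_div_two]
  ring

lemma hasDerivAt_arctan_add_div_one_add_sq (u : ℝ) :
    HasDerivAt (fun u => arctan u + u / (1 + u ^ 2)) (2 / (1 + u ^ 2) ^ 2) u := by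
  have hden : 1 + u ^ 2 ≠ 0 := by positivity
  have hquot := (hasDerivAt_id' u).div ((hasDerivAt_pow 2 u).const_add 1) hden
  refine ((hasDerivAt_arctan u).add hquot).congr_deriv ?_
  field_simp
  ring

lemma phiMoment_eq (a : ℝ) :
    phiMoment a = √(2 * π) / 4 + (arctan a + a / (1 + a ^ 2)) / √(2 * π) := by
  let G : ℝ → ℝ := fun a => √(2 * π) / 4 + (arctan a + a / (1 + a ^ 2)) / √(2 * π)
  have hG (u : ℝ) : HasDerivAt G (2 / (√(2 * π) * (1 + u ^ 2) ^ 2)) u := by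
    refine ((hasDerivAt_arctan_add_div_one_add_sq u).div_const _).const_add _ |>.congr_deriv ?_
    field_simp
  have hG0 : phiMoment 0 = G 0 := by simp [G, phiMoment_zero]
  have hderiv (u : ℝ) : fderiv ℝ phiMoment u = fderiv ℝ G u := by
    rw [(hasDerivAt_phiMoment u).hasFDerivAt.fderiv, (hG u).hasFDerivAt.fderiv]
  exact congrFun (eq_of_fderiv_eq (fun u => (hasDerivAt_phiMoment u).differentiableAt)
    (fun u => (hG u).differentiableAt) hderiv 0 hG0) a

theorem stmt3 (ρ : ℝ) (h1 : -1 < ρ) (h2 : ρ < 0) :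
    ∫ t in Set.Ioi (0 : ℝ), t ^ 2 * Real.exp (-t ^ 2 / 2) * Phi (ρ * t / Real.sqrt (1 - ρ ^ 2))
      = -(1 / Real.sqrt (2 * Real.pi)) *
          (Real.arctan (Real.sqrt (1 - ρ ^ 2) / ρ) - ρ * Real.sqrt (1 - ρ ^ 2)) := by
  have hρ : 0 < 1 - ρ ^ 2 := by nlinarith
  set c := √(1 - ρ ^ 2)
  have hc : 0 < c := sqrt_pos.2 hρ
  have hc2 : c ^ 2 = 1 - ρ ^ 2 := sq_sqrt hρ.le
  have hπ : √(2 * π) ^ 2 = 2 * π := sq_sqrt (by positivity)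
  calc _ = phiMoment (ρ / c) :=
        setIntegral_congr_fun measurableSet_Ioi fun t _ => by rw [mul_div_right_comm]
    _ = _ := by
      rw [phiMoment_eq, ← inv_div c ρ, arctan_inv_of_neg (div_neg_of_pos_of_neg hc h2)]
      field_simp
      rw [hπ, hc2]
      ring
end

section
/- If (X,Y) is bivariate normal with standard normal marginals and correlation ρ ∈ (0,1), then E[(Y⁻·1_{X<0} + Y⁺·1_{X≥0})²] = 1 − (1/π)·(arctan(√(1-ρ²)/ρ) − ρ√(1-ρ²)). -/
/-!
On `{X ≥ 0}` the integrand is `(Y⁺)²` and on `{X < 0}` it is `(Y⁻)²`, i.e. it is `Y²` when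
`sg X · Y ≥ 0` and `0` otherwise. Write `X = √(1 - ρ²) U + ρ Y` with `U, Y` independent standard
normal and pass to polar coordinates `(U, Y) = r (cos θ, sin θ)`; with `α = arcsin ρ` this gives
`X = r cos (θ - α)`. The radial factor is `(2π)⁻¹ ∫₀^∞ r³ e^{-r²/2} dr = π⁻¹`, and the angular
factor is the integral of `sin² θ` over the arcs `(-π, α - π/2)` and `(0, α + π/2)` where
`cos (θ - α)` and `sin θ` have the same sign, namely `α + π/2 + sin α cos α`. Finally
`arctan (√(1 - ρ²) / ρ) = π/2 - α`.
-/

open MeasureTheory Real Filter Set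

lemma integral_Ioi_pow_three_mul_exp_neg_sq_div_two :
    ∫ r in Ioi (0 : ℝ), r ^ 3 * exp (-r ^ 2 / 2) = 2 := by
  have h := integral_rpow_mul_exp_neg_mul_rpow (p := 2) (q := 3) (b := 1 / 2)
    two_pos (by norm_num) (by norm_num)
  norm_num [Real.Gamma_two] at h
  convert h using 5 with r
  ring

lemma integrable_sq_mul_exp_neg_mul_sq {b : ℝ} (hb : 0 < b) :
    Integrable fun y : ℝ => y ^ 2 * exp (-b * y ^ 2) := by
  simpa using integrable_rpow_mul_exp_neg_mul_sq hb (s := 2) (by norm_num)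

lemma integral_comp_mul_add_eq {c : ℝ} (hc : 0 < c) (d : ℝ) (f : ℝ → ℝ) :
    ∫ x, f x = c * ∫ u, f (c * u + d) := by
  rw [Measure.integral_comp_mul_left (fun t => f (t + d)) c, integral_add_right_eq_self,
    abs_of_pos (inv_pos.2 hc), smul_eq_mul, mul_inv_cancel_left₀ hc.ne']

lemma measurable_sg : Measurable sg :=
  Measurable.ite measurableSet_Ici measurable_const measurable_const

lemma sg_mul_of_pos {r : ℝ} (hr : 0 < r) (x : ℝ) : sg (r * x) = sg x := by
  simp only [sg, mul_nonneg_iff_of_pos_left hr]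

section phi2

variable {ρ : ℝ}

lemma phi2_zero (x y : ℝ) : phi2 0 x y = (2 * π)⁻¹ * exp (-(x ^ 2 + y ^ 2) / 2) := by
  simp [phi2]

lemma phi2_nonneg (hρ : |ρ| < 1) (x y : ℝ) : 0 ≤ phi2 ρ x y := by
  have : 0 < 1 - ρ ^ 2 := by nlinarith [sq_abs ρ, abs_nonneg ρ]
  unfold phi2
  positivity

lemma phi2_le (hρ : |ρ| < 1) (x y : ℝ) :
    phi2 ρ x y ≤ (2 * π * √(1 - ρ ^ 2))⁻¹ * exp (-(x ^ 2 + y ^ 2) / 4) := by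
  have : 0 < 1 - ρ ^ 2 := by nlinarith [sq_abs ρ, abs_nonneg ρ]
  rw [phi2, one_div]
  refine mul_le_mul_of_nonneg_left (exp_le_exp.2 ?_) (by positivity)
  rw [div_le_div_iff₀ (by positivity) (by norm_num)]
  nlinarith [sq_nonneg (x - ρ * y), sq_nonneg (y - ρ * x)]

lemma mul_phi2_shear (hρ : |ρ| < 1) (u y : ℝ) :
    √(1 - ρ ^ 2) * phi2 ρ (√(1 - ρ ^ 2) * u + ρ * y) y = phi2 0 u y := by
  have h : 0 < 1 - ρ ^ 2 := by nlinarith [sq_abs ρ, abs_nonneg ρ]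
  have hQ : (√(1 - ρ ^ 2) * u + ρ * y) ^ 2 - 2 * ρ * (√(1 - ρ ^ 2) * u + ρ * y) * y + y ^ 2
      = (1 - ρ ^ 2) * (u ^ 2 + y ^ 2) := by
    linear_combination u ^ 2 * Real.sq_sqrt h.le
  rw [phi2, hQ, phi2_zero, show -((1 - ρ ^ 2) * (u ^ 2 + y ^ 2)) / (2 * (1 - ρ ^ 2))
    = -(u ^ 2 + y ^ 2) / 2 by field_simp]
  field_simp

lemma integrable_mul_phi2_of_abs_le_sq (hρ : |ρ| < 1) {g : ℝ → ℝ → ℝ}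
    (hg : Measurable (Function.uncurry g)) (hg_le : ∀ x y, |g x y| ≤ y ^ 2) :
    Integrable fun p : ℝ × ℝ => g p.1 p.2 * phi2 ρ p.1 p.2 := by
  have hdom : Integrable fun p : ℝ × ℝ => (2 * π * √(1 - ρ ^ 2))⁻¹ *
      (exp (-(1 / 4) * p.1 ^ 2) * (p.2 ^ 2 * exp (-(1 / 4) * p.2 ^ 2))) :=
    ((integrable_exp_neg_mul_sq (by norm_num)).mul_prod
      (integrable_sq_mul_exp_neg_mul_sq (by norm_num))).const_mul _
  refine hdom.mono' (hg.mul (by unfold phi2; fun_prop)).aestronglyMeasurable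
    (.of_forall fun p => ?_)
  rw [norm_mul, Real.norm_eq_abs, Real.norm_of_nonneg (phi2_nonneg hρ _ _)]
  calc |g p.1 p.2| * phi2 ρ p.1 p.2
      ≤ p.2 ^ 2 * ((2 * π * √(1 - ρ ^ 2))⁻¹ * exp (-(p.1 ^ 2 + p.2 ^ 2) / 4)) :=
        mul_le_mul (hg_le _ _) (phi2_le hρ _ _) (phi2_nonneg hρ _ _) (sq_nonneg _)
    _ = _ := by
        rw [show -(p.1 ^ 2 + p.2 ^ 2) / 4 = -(1 / 4) * p.1 ^ 2 + -(1 / 4) * p.2 ^ 2 by ring,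
          exp_add]
        ring

lemma integral_mul_phi2_eq_integral_shear (hρ : |ρ| < 1) {g : ℝ → ℝ → ℝ}
    (hg : Measurable (Function.uncurry g)) (hg_le : ∀ x y, |g x y| ≤ y ^ 2) :
    ∫ p : ℝ × ℝ, g p.1 p.2 * phi2 ρ p.1 p.2
      = ∫ p : ℝ × ℝ, g (√(1 - ρ ^ 2) * p.1 + ρ * p.2) p.2 * phi2 0 p.1 p.2 := by
  set s := √(1 - ρ ^ 2)
  have hs : 0 < s := Real.sqrt_pos.2 (by nlinarith [sq_abs ρ, abs_nonneg ρ])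
  have hsheared : Measurable (Function.uncurry fun u y => g (s * u + ρ * y) y) :=
    hg.comp (f := fun p : ℝ × ℝ => (s * p.1 + ρ * p.2, p.2)) (by fun_prop)
  rw [Measure.volume_eq_prod,
    integral_prod_symm _ (integrable_mul_phi2_of_abs_le_sq hρ hg hg_le),
    integral_prod_symm _ (integrable_mul_phi2_of_abs_le_sq (g := fun u y => g (s * u + ρ * y) y)
      (by simp) hsheared fun _ _ => hg_le _ _)]
  congr 1 with y
  rw [integral_comp_mul_add_eq hs (ρ * y), ← integral_const_mul]
  congr 1 with u
  rw [← mul_phi2_shear hρ]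
  ring

lemma integral_mul_phi2_zero_of_homogeneous {g : ℝ → ℝ → ℝ}
    (hg : ∀ r > 0, ∀ x y, g (r * x) (r * y) = r ^ 2 * g x y) :
    ∫ p : ℝ × ℝ, g p.1 p.2 * phi2 0 p.1 p.2
      = π⁻¹ * ∫ θ in Ioo (-π) π, g (cos θ) (sin θ) := by
  rw [← integral_comp_polarCoord_symm, polarCoord_target]
  calc _ = ∫ p in Ioi (0 : ℝ) ×ˢ Ioo (-π) π,
        p.1 ^ 3 * exp (-p.1 ^ 2 / 2) * ((2 * π)⁻¹ * g (cos p.2) (sin p.2)) := by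
        refine setIntegral_congr_fun (measurableSet_Ioi.prod measurableSet_Ioo) fun p hp => ?_
        obtain ⟨r, θ⟩ := p
        have hr : 0 < r := hp.1
        simp only [polarCoord_symm_apply, smul_eq_mul, hg r hr, phi2_zero]
        rw [show (r * cos θ) ^ 2 + (r * sin θ) ^ 2 = r ^ 2 by
          rw [mul_pow, mul_pow, ← mul_add, cos_sq_add_sin_sq, mul_one]]
        ring
    _ = _ := by
        rw [Measure.volume_eq_prod, ← Measure.prod_restrict,
          integral_prod_mul (fun r : ℝ => r ^ 3 * exp (-r ^ 2 / 2))
            (fun θ => (2 * π)⁻¹ * g (cos θ) (sin θ)),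
          integral_Ioi_pow_three_mul_exp_neg_sq_div_two, integral_const_mul]
        field_simp

end phi2

noncomputable def sameSideSq (x y : ℝ) : ℝ := if 0 ≤ sg x * y then y ^ 2 else 0

lemma sq_negPart_add_posPart_eq_sameSideSq (x y : ℝ) :
    (max (-y) 0 * (if x < 0 then (1 : ℝ) else 0) + max y 0 * (if 0 ≤ x then (1 : ℝ) else 0)) ^ 2
      = sameSideSq x y := by
  unfold sameSideSq sg
  rcases le_or_gt 0 x with hx | hx <;> rcases le_or_gt 0 y with hy | hy
  · simp [hx, hy, not_lt.2 hx]
  · simp [hx, hy.le, not_lt.2 hx, not_le.2 hy]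
  · simp [hx, hy, not_le.2 hx]
    intro hy'
    simp [le_antisymm hy' hy]
  · simp [hx, hy.le, not_le.2 hx]

lemma abs_sameSideSq_le (x y : ℝ) : |sameSideSq x y| ≤ y ^ 2 := by
  unfold sameSideSq
  split_ifs <;> simp [sq_nonneg]

lemma measurable_sameSideSq : Measurable (Function.uncurry sameSideSq) :=
  Measurable.ite (measurableSet_le measurable_const ((measurable_sg.comp measurable_fst).mul
    measurable_snd)) (measurable_snd.pow_const 2) measurable_const

lemma sameSideSq_mul {r : ℝ} (hr : 0 < r) (x y : ℝ) :
    sameSideSq (r * x) (r * y) = r ^ 2 * sameSideSq x y := by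
  simp only [sameSideSq, sg_mul_of_pos hr, mul_left_comm _ r, mul_nonneg_iff_of_pos_left hr]
  split_ifs <;> ring

lemma sameSideSq_of_mul_pos {x y : ℝ} (h : 0 < x * y) : sameSideSq x y = y ^ 2 := by
  rcases mul_pos_iff.1 h with ⟨hx, hy⟩ | ⟨hx, hy⟩
  · simp [sameSideSq, sg, hx.le, hy.le]
  · simp [sameSideSq, sg, hx.not_ge, hy.le]

lemma sameSideSq_of_mul_neg {x y : ℝ} (h : x * y < 0) : sameSideSq x y = 0 := by
  rcases mul_neg_iff.1 h with ⟨hx, hy⟩ | ⟨hx, hy⟩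
  · simp [sameSideSq, sg, hx.le, hy]
  · simp [sameSideSq, sg, hx.not_ge, hy]

lemma integral_sameSideSq_cos_sub_sin {α : ℝ} (h₀ : -(π / 2) < α) (h₁ : α < π / 2) :
    ∫ θ in Ioo (-π) π, sameSideSq (cos (θ - α)) (sin θ) = α + π / 2 + sin α * cos α := by
  have hπ := pi_pos
  set W := fun θ => sameSideSq (cos (θ - α)) (sin θ)
  have hW : ∀ a b, IntervalIntegrable W volume a b := fun a b =>
    (intervalIntegrable_const (c := (1 : ℝ))).mono_fun
      (measurable_sameSideSq.comp (f := fun θ => (cos (θ - α), sin θ))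
        (by fun_prop)).aestronglyMeasurable
      (.of_forall fun θ => by
        simpa using (abs_sameSideSq_le _ _).trans (sin_sq_le_one θ))
  have hcos_neg : ∀ θ, α + π / 2 < θ → θ < α + 3 * π / 2 → cos (θ - α) < 0 := fun θ h h' =>
    cos_neg_of_pi_div_two_lt_of_lt (by linarith) (by linarith)
  have hcos_neg' : ∀ θ, α - 3 * π / 2 < θ → θ < α - π / 2 → cos (θ - α) < 0 := fun θ h h' => by
    rw [← cos_neg]; exact cos_neg_of_pi_div_two_lt_of_lt (by linarith) (by linarith)
  have hcos_pos : ∀ θ, α - π / 2 < θ → θ < α + π / 2 → 0 < cos (θ - α) := fun θ h h' =>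
    cos_pos_of_mem_Ioo ⟨by linarith, by linarith⟩
  have piece₁ : ∫ θ in (-π)..(α - π / 2), W θ = ∫ θ in (-π)..(α - π / 2), sin θ ^ 2 :=
    intervalIntegral.integral_congr_Ioo_of_le (by linarith) fun θ ⟨h, h'⟩ =>
      sameSideSq_of_mul_pos (mul_pos_of_neg_of_neg (hcos_neg' θ (by linarith) h')
        (sin_neg_of_neg_of_neg_pi_lt (by linarith) h))
  have piece₂ : ∫ θ in (α - π / 2)..0, W θ = ∫ θ in (α - π / 2)..0, (0 : ℝ) :=
    intervalIntegral.integral_congr_Ioo_of_le (by linarith) fun θ ⟨h, h'⟩ =>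
      sameSideSq_of_mul_neg (mul_neg_of_pos_of_neg (hcos_pos θ h (by linarith))
        (sin_neg_of_neg_of_neg_pi_lt h' (by linarith)))
  have piece₃ : ∫ θ in (0 : ℝ)..(α + π / 2), W θ = ∫ θ in (0 : ℝ)..(α + π / 2), sin θ ^ 2 :=
    intervalIntegral.integral_congr_Ioo_of_le (by linarith) fun θ ⟨h, h'⟩ =>
      sameSideSq_of_mul_pos (mul_pos (hcos_pos θ (by linarith) h')
        (sin_pos_of_pos_of_lt_pi h (by linarith)))
  have piece₄ : ∫ θ in (α + π / 2)..π, W θ = ∫ θ in (α + π / 2)..π, (0 : ℝ) :=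
    intervalIntegral.integral_congr_Ioo_of_le (by linarith) fun θ ⟨h, h'⟩ =>
      sameSideSq_of_mul_neg (mul_neg_of_neg_of_pos (hcos_neg θ h (by linarith))
        (sin_pos_of_pos_of_lt_pi (by linarith) h'))
  rw [← integral_Ioc_eq_integral_Ioo, ← intervalIntegral.integral_of_le (by linarith),
    ← intervalIntegral.integral_add_adjacent_intervals (hW _ (α - π / 2)) (hW _ π),
    ← intervalIntegral.integral_add_adjacent_intervals (hW _ 0) (hW _ π),
    ← intervalIntegral.integral_add_adjacent_intervals (hW _ (α + π / 2)) (hW _ π),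
    piece₁, piece₂, piece₃, piece₄, integral_sin_sq, integral_sin_sq, sin_sub_pi_div_two,
    cos_sub_pi_div_two, sin_add_pi_div_two, cos_add_pi_div_two]
  simp only [sin_neg, sin_pi, cos_neg, cos_pi, sin_zero, cos_zero, intervalIntegral.integral_zero]
  ring

theorem stmt11 (ρ : ℝ) (h1 : 0 < ρ) (h2 : ρ < 1) :
    ∫ p : ℝ × ℝ,
        (max (-p.2) 0 * (if p.1 < 0 then (1 : ℝ) else 0) +
          max p.2 0 * (if 0 ≤ p.1 then (1 : ℝ) else 0)) ^ 2 * phi2 ρ p.1 p.2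
      = 1 - (1 / Real.pi) *
          (Real.arctan (Real.sqrt (1 - ρ ^ 2) / ρ) - ρ * Real.sqrt (1 - ρ ^ 2)) := by
  have hρ : |ρ| < 1 := abs_lt.2 ⟨by linarith, h2⟩
  set s := √(1 - ρ ^ 2)
  have hsplit : ∀ θ, s * cos θ + ρ * sin θ = cos (θ - arcsin ρ) := fun θ => by
    rw [cos_sub, cos_arcsin, sin_arcsin (by linarith) h2.le]
    ring
  simp_rw [sq_negPart_add_posPart_eq_sameSideSq]
  rw [integral_mul_phi2_eq_integral_shear hρ measurable_sameSideSq abs_sameSideSq_le,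
    integral_mul_phi2_zero_of_homogeneous (g := fun u y => sameSideSq (s * u + ρ * y) y)
      fun r hr x y => by rw [← sameSideSq_mul hr]; ring_nf]
  simp_rw [hsplit]
  rw [integral_sameSideSq_cos_sub_sin (neg_pi_div_two_lt_arcsin.2 (by linarith))
      (arcsin_lt_pi_div_two.2 h2), sin_arcsin (by linarith) h2.le, cos_arcsin,
    ← arccos_eq_arctan h1, arccos_eq_pi_div_two_sub_arcsin]
  field_simp
  ring
end
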